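/- arXiv:2411.02368 — 4 statements merged into one kernel-verified Lean document; each statement's English description precedes it below -/
import Mathlib

section
/- Let A be a positive semidefinite Hermitian matrix (over ℝ or ℂ) of size n. Then Tr[A²(1+A)⁻¹] ≤ (Tr A)² / (1 + Tr A), where 1 denotes the identity matrix and the trace is the usual matrix trace. -/
open scoped ComplexOrder

theorem sum_sq_div_le {ι : Type*} (s : Finset ι) (f : ι → ℝ) (hf : ∀ i ∈ s, 0 ≤ f i) :
    ∑ i ∈ s, (f i)^2 / (1 + f i) ≤ (∑ i ∈ s, f i)^2 / (1 + ∑ i ∈ s, f i) := by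
  set t := ∑ i ∈ s, f i with ht
  have htnn : 0 ≤ t := Finset.sum_nonneg hf
  have h1t : 0 < 1 + t := by linarith
  have key : ∀ i ∈ s, (f i)^2 / (1 + f i) = f i - f i / (1 + f i) := by
    intro i hi
    have h : 0 < 1 + f i := by have := hf i hi; linarith
    field_simp
    ring
  rw [Finset.sum_congr rfl key, Finset.sum_sub_distrib]
  have h2 : t ^ 2 / (1 + t) = t - t / (1 + t) := by field_simp; ring
  rw [h2]
  have : t / (1 + t) ≤ ∑ i ∈ s, f i / (1 + f i) := by
    rw [ht, Finset.sum_div]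
    apply Finset.sum_le_sum
    intro i hi
    have hle : f i ≤ t := Finset.single_le_sum hf hi
    have h : 0 < 1 + f i := by have := hf i hi; linarith
    apply div_le_div_of_nonneg_left (hf i hi) h
    linarith
  linarith

theorem trace_sq_mul_inv_one_add_le {n : ℕ} (A : Matrix (Fin n) (Fin n) ℂ)
    (hA : A.PosSemidef) :
    ((A ^ 2 * (1 + A)⁻¹).trace).re ≤ (A.trace.re) ^ 2 / (1 + A.trace.re) := by
  have hH := hA.1
  set U : Matrix (Fin n) (Fin n) ℂ := (hH.eigenvectorUnitary : Matrix (Fin n) (Fin n) ℂ) with hU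
  set lam := hH.eigenvalues with hlam
  have hnn : ∀ i, 0 ≤ lam i := fun i => hA.eigenvalues_nonneg i
  set D : Matrix (Fin n) (Fin n) ℂ := Matrix.diagonal (fun i => (lam i : ℂ)) with hD
  have hspec : A = U * D * star U := by
    have := hH.spectral_theorem
    simpa [hU, hD, Function.comp_def] using this
  have hUU : star U * U = 1 := Unitary.coe_star_mul_self hH.eigenvectorUnitary
  have hUU' : U * star U = 1 := Unitary.coe_mul_star_self hH.eigenvectorUnitary
  -- A^2 = U D^2 U*
  have hA2 : A ^ 2 = U * D ^ 2 * star U := by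
    rw [pow_two, pow_two, hspec]
    rw [show U * D * star U * (U * D * star U) = U * D * (star U * U) * D * star U by
      noncomm_ring]
    rw [hUU, mul_one]
    noncomm_ring
  -- 1 + A = U (1 + D) U*
  have h1A : 1 + A = U * (1 + D) * star U := by
    rw [hspec, mul_add, mul_one, add_mul, hUU']
  -- inverse of 1 + D
  have hne : ∀ i, (1 : ℂ) + (lam i : ℂ) ≠ 0 := by
    intro i h
    have := congrArg Complex.re h
    simp at this
    linarith [hnn i]
  set E : Matrix (Fin n) (Fin n) ℂ := Matrix.diagonal (fun i => (1 + (lam i : ℂ))⁻¹) with hE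
  have hdiag : (1 : Matrix (Fin n) (Fin n) ℂ) + D =
      Matrix.diagonal (fun i => 1 + (lam i : ℂ)) := by
    rw [hD, ← Matrix.diagonal_one, Matrix.diagonal_add]
  have h1D : (1 + D) * E = 1 := by
    rw [hdiag, hE, Matrix.diagonal_mul_diagonal]
    rw [show (fun i => (1 + (lam i : ℂ)) * (1 + (lam i : ℂ))⁻¹) = fun _ => (1:ℂ) from
      funext fun i => mul_inv_cancel₀ (hne i)]
    exact Matrix.diagonal_one
  have hDinvE : (1 + D)⁻¹ = E := Matrix.inv_eq_right_inv h1D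
  have hinv : (1 + A)⁻¹ = U * E * star U := by
    rw [h1A]
    apply Matrix.inv_eq_right_inv
    calc (U * (1 + D) * star U) * (U * E * star U)
        = U * ((1 + D) * ((star U * U) * E)) * star U := by noncomm_ring
      _ = 1 := by rw [hUU, one_mul, h1D, mul_one, hUU']
  -- trace computation
  have htr : (A ^ 2 * (1 + A)⁻¹).trace = (D ^ 2 * E).trace := by
    rw [hA2, hinv]
    calc (U * D ^ 2 * star U * (U * E * star U)).trace
        = (U * (D ^ 2 * E) * star U).trace := by
          rw [show U * D ^ 2 * star U * (U * E * star U)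
            = U * (D ^ 2 * ((star U * U) * E)) * star U by noncomm_ring, hUU, one_mul]
      _ = (D ^ 2 * E).trace := by
          rw [Matrix.trace_mul_cycle, hUU, one_mul]
  have htrA : A.trace = ∑ i, (lam i : ℂ) := by
    rw [hspec, Matrix.trace_mul_cycle, hUU, one_mul, hD, Matrix.trace_diagonal]
  -- compute trace of D^2 * E
  have hDtr : (D ^ 2 * E).trace = ∑ i, ((lam i : ℂ)^2 / (1 + lam i)) := by
    rw [hD, hE, Matrix.diagonal_pow, Matrix.diagonal_mul_diagonal, Matrix.trace_diagonal]
    simp [div_eq_mul_inv]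
  rw [htr, hDtr, htrA]
  have hre1 : (∑ i, ((lam i : ℂ)^2 / (1 + lam i))).re = ∑ i, (lam i)^2 / (1 + lam i) := by
    rw [show (∑ i, ((lam i : ℂ)^2 / (1 + lam i))) = ((∑ i, (lam i)^2 / (1 + lam i) : ℝ) : ℂ) by
      push_cast; rfl]
    exact Complex.ofReal_re _
  have hre2 : (∑ i, (lam i : ℂ)).re = ∑ i, lam i := by
    rw [show (∑ i, (lam i : ℂ)) = ((∑ i, lam i : ℝ) : ℂ) by push_cast; rfl]
    exact Complex.ofReal_re _
  rw [hre1, hre2]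
  exact sum_sq_div_le Finset.univ lam (fun i _ => hnn i)
end

section
/- Let V be a 2n×2n real symmetric matrix satisfying the uncertainty relation V + iΩ ≥ 0 (as a Hermitian complex matrix), where Ω is the standard symplectic form. Let X̃ be a real symmetric 2n×2n matrix. Then Tr[X̃ V X̃ V] + Tr[Ω X̃ Ω X̃] ≤ (Tr[|X̃| V])², where |X̃| = sqrt(X̃ᵀ X̃). -/
open scoped ComplexOrder

/-- The standard symplectic form `⊕ⱼ [[0,1],[-1,0]]` on `ℝ^{2n}`. -/
noncomputable def Omega (n : ℕ) : Matrix (Fin 2 × Fin n) (Fin 2 × Fin n) ℝ :=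
  Matrix.blockDiagonal (fun _ : Fin n => !![(0 : ℝ), 1; -1, 0])

/-- The positive semidefinite square root of a positive semidefinite matrix
(the definition `Matrix.PosSemidef.sqrt` of the older Mathlib, removed since). -/
noncomputable def Matrix.PosSemidef.sqrt {n : Type*} [Fintype n] [DecidableEq n] {𝕜 : Type*}
    [RCLike 𝕜] {A : Matrix n n 𝕜} (hA : A.PosSemidef) : Matrix n n 𝕜 :=
  hA.1.eigenvectorUnitary.1 * Matrix.diagonal ((↑) ∘ (√·) ∘ hA.1.eigenvalues) *
  (star hA.1.eigenvectorUnitary : Matrix n n 𝕜)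

open Matrix

section Aux

variable {ι : Type*} [Fintype ι] [DecidableEq ι]

/-- Entrywise Cauchy–Schwarz for complex PSD matrices. -/
lemma entry_cs {m : Matrix ι ι ℂ} (hm : m.PosSemidef) (i j : ι) :
    Complex.normSq (m i j) ≤ (m i i).re * (m j j).re := by
  obtain ⟨B, rfl⟩ : ∃ B : Matrix ι ι ℂ, m = Bᴴ * B := by
    open scoped MatrixOrder Matrix.Norms.L2Operator in
    exact CStarAlgebra.nonneg_iff_eq_star_mul_self.mp hm.nonneg
  set x : EuclideanSpace ℂ ι := WithLp.toLp 2 (fun k => B k i) with hx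
  set y : EuclideanSpace ℂ ι := WithLp.toLp 2 (fun k => B k j) with hy
  have hij : (Bᴴ * B) i j = (inner ℂ x y : ℂ) := by
    simp [Matrix.mul_apply, Matrix.conjTranspose_apply, PiLp.inner_apply, hx, hy,
      RCLike.inner_apply, mul_comm]
  have hii : (Bᴴ * B) i i = (inner ℂ x x : ℂ) := by
    simp [Matrix.mul_apply, Matrix.conjTranspose_apply, PiLp.inner_apply, hx,
      RCLike.inner_apply, -inner_self_eq_norm_sq_to_K, mul_comm]
  have hjj : (Bᴴ * B) j j = (inner ℂ y y : ℂ) := by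
    simp [Matrix.mul_apply, Matrix.conjTranspose_apply, PiLp.inner_apply, hy,
      RCLike.inner_apply, -inner_self_eq_norm_sq_to_K, mul_comm]
  rw [hij, hii, hjj]
  have h1 : ‖(inner ℂ x y : ℂ)‖ ≤ ‖x‖ * ‖y‖ := norm_inner_le_norm x y
  calc Complex.normSq (inner ℂ x y : ℂ) = ‖(inner ℂ x y : ℂ)‖ ^ 2 := by
        rw [← Complex.sq_norm]
    _ ≤ (‖x‖ * ‖y‖) ^ 2 := pow_le_pow_left₀ (norm_nonneg _) h1 2
    _ = ‖x‖ ^ 2 * ‖y‖ ^ 2 := by ring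
    _ = (inner ℂ x x : ℂ).re * (inner ℂ y y : ℂ).re := by
        have hx2 := inner_self_eq_norm_sq (𝕜 := ℂ) x
        have hy2 := inner_self_eq_norm_sq (𝕜 := ℂ) y
        simp only [RCLike.re_to_complex] at hx2 hy2
        rw [hx2, hy2]

lemma trace_diag_mul_diag_mul (d e : ι → ℝ) (P Q : Matrix ι ι ℝ) :
    (Matrix.diagonal d * P * Matrix.diagonal e * Q).trace
      = ∑ i, ∑ j, d i * e j * (P i j * Q j i) := by
  have h3 : ∀ i j, (Matrix.diagonal d * P * Matrix.diagonal e) i j = d i * P i j * e j := by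
    intro i j
    rw [Matrix.mul_diagonal, Matrix.diagonal_mul]
  simp only [Matrix.trace, Matrix.diag, Matrix.mul_apply, h3]
  exact Finset.sum_congr rfl fun i _ => Finset.sum_congr rfl fun j _ => by ring

lemma trace_rot4 (A B C D : Matrix ι ι ℝ) :
    (A * B * C * D).trace = (D * A * B * C).trace := by
  rw [Matrix.trace_mul_cycle (A * B) C D, ← Matrix.mul_assoc]

lemma trace_diag_mul (d : ι → ℝ) (P : Matrix ι ι ℝ) :
    (Matrix.diagonal d * P).trace = ∑ i, d i * P i i := by
  simp [Matrix.trace, Matrix.diag, Matrix.diagonal_mul]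

open scoped MatrixOrder in
lemma psd_sqrt_eq_of_sq {A B : Matrix ι ι ℝ} (hA : A.PosSemidef) (hB : B.PosSemidef)
    (h : B ^ 2 = A) : hA.sqrt = B := by
  have e1 : hA.sqrt = CFC.sqrt A := by
    rw [CFC.sqrt_eq_real_sqrt _ hA.nonneg, cfcₙ_eq_cfc, hA.1.cfc_eq]
    rfl
  rw [e1]
  exact CFC.sqrt_unique (a := A) (b := B) (by rw [← pow_two]; exact h) hB.nonneg

end Aux

theorem trace_XVXV_add_trace_OmegaXOmegaX_le {n : ℕ}
    (V X : Matrix (Fin 2 × Fin n) (Fin 2 × Fin n) ℝ)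
    (hV : V.IsSymm) (hX : X.IsSymm)
    (hunc : (V.map (Complex.ofReal) +
      Complex.I • (Omega n).map Complex.ofReal).PosSemidef) :
    (X * V * X * V).trace + (Omega n * X * Omega n * X).trace ≤
      (((Matrix.posSemidef_conjTranspose_mul_self X).sqrt * V).trace) ^ 2 := by
  classical
  have hXh : X.IsHermitian := by
    rw [Matrix.IsHermitian, Matrix.conjTranspose_eq_transpose_of_trivial]
    exact hX
  set U : Matrix (Fin 2 × Fin n) (Fin 2 × Fin n) ℝ :=
    (hXh.eigenvectorUnitary : Matrix (Fin 2 × Fin n) (Fin 2 × Fin n) ℝ) with hUdef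
  set lam : (Fin 2 × Fin n) → ℝ := hXh.eigenvalues with hlamdef
  have hU1 : Uᴴ * U = 1 := by
    rw [← Matrix.star_eq_conjTranspose]
    exact Matrix.mem_unitaryGroup_iff'.mp hXh.eigenvectorUnitary.2
  have hU2 : U * Uᴴ = 1 := by
    rw [← Matrix.star_eq_conjTranspose]
    exact Matrix.mem_unitaryGroup_iff.mp hXh.eigenvectorUnitary.2
  have hUT : Uᴴ = Uᵀ := Matrix.conjTranspose_eq_transpose_of_trivial U
  have hXeq : X = U * Matrix.diagonal lam * Uᴴ := by
    have := hXh.spectral_theorem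
    rwa [Unitary.conjStarAlgAut_apply, Matrix.star_eq_conjTranspose, RCLike.ofReal_real_eq_id,
      Function.id_comp] at this
  -- conjugation helpers
  have hconj : ∀ P Q : Matrix (Fin 2 × Fin n) (Fin 2 × Fin n) ℝ,
      (U * P * Uᴴ) * (U * Q * Uᴴ) = U * (P * Q) * Uᴴ := by
    intro P Q
    have h1 : (U * P * Uᴴ) * (U * Q * Uᴴ) = U * P * (Uᴴ * U) * (Q * Uᴴ) := by
      noncomm_ring
    rw [h1, hU1, Matrix.mul_one]
    noncomm_ring
  have htr : ∀ Z : Matrix (Fin 2 × Fin n) (Fin 2 × Fin n) ℝ,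
      (U * Z * Uᴴ).trace = Z.trace := by
    intro Z
    rw [Matrix.trace_mul_cycle, hU1, Matrix.one_mul]
  set a : Matrix (Fin 2 × Fin n) (Fin 2 × Fin n) ℝ := Uᴴ * V * U with hadef
  set b : Matrix (Fin 2 × Fin n) (Fin 2 × Fin n) ℝ := Uᴴ * (Omega n) * U with hbdef
  have hVeq : V = U * a * Uᴴ := by
    rw [hadef]
    have h1 : U * (Uᴴ * V * U) * Uᴴ = (U * Uᴴ) * V * (U * Uᴴ) := by noncomm_ring
    rw [h1, hU2, Matrix.one_mul, Matrix.mul_one]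
  have hOeq : Omega n = U * b * Uᴴ := by
    rw [hbdef]
    have h1 : U * (Uᴴ * (Omega n) * U) * Uᴴ = (U * Uᴴ) * (Omega n) * (U * Uᴴ) := by noncomm_ring
    rw [h1, hU2, Matrix.one_mul, Matrix.mul_one]
  -- symmetry facts
  have hOT : (Omega n)ᵀ = -(Omega n) := by
    ext ⟨i, k⟩ ⟨j, l⟩
    simp only [Matrix.transpose_apply, Omega, Matrix.blockDiagonal_apply, Matrix.neg_apply]
    rcases eq_or_ne k l with h | h
    · subst h
      simp only [if_pos rfl]
      fin_cases i <;> fin_cases j <;> norm_num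
    · simp [h, Ne.symm h]
  have haSymm : ∀ i j, a j i = a i j := by
    intro i j
    have h : aᵀ = a := by
      rw [hadef, hUT]
      calc (Uᵀ * V * U)ᵀ = Uᵀ * (Vᵀ * Uᵀᵀ) := by
            rw [Matrix.transpose_mul, Matrix.transpose_mul]
        _ = Uᵀ * V * U := by rw [hV, Matrix.transpose_transpose, Matrix.mul_assoc]
    conv_rhs => rw [← h]
    rfl
  have hbAnti : ∀ i j, b j i = -(b i j) := by
    intro i j
    have h : bᵀ = -b := by
      rw [hbdef, hUT]
      calc (Uᵀ * Omega n * U)ᵀ = Uᵀ * ((Omega n)ᵀ * Uᵀᵀ) := by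
            rw [Matrix.transpose_mul, Matrix.transpose_mul]
        _ = -(Uᵀ * Omega n * U) := by
            rw [hOT, Matrix.transpose_transpose, Matrix.neg_mul, Matrix.mul_neg,
              ← Matrix.mul_assoc]
    have h2 := congrFun (congrFun h i) j
    simpa using h2
  -- the complex PSD matrix m
  set Uc : Matrix (Fin 2 × Fin n) (Fin 2 × Fin n) ℂ := U.map Complex.ofReal with hUcdef
  have hstarUc : Ucᴴ = (Uᴴ).map Complex.ofReal := by
    ext i j
    simp [hUcdef, Matrix.conjTranspose_apply, Matrix.map_apply, Complex.conj_ofReal]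
  set Mc : Matrix (Fin 2 × Fin n) (Fin 2 × Fin n) ℂ :=
    V.map Complex.ofReal + Complex.I • (Omega n).map Complex.ofReal with hMcdef
  have hm : (Ucᴴ * Mc * Uc).PosSemidef := hunc.conjTranspose_mul_mul_same Uc
  have hmap2 : ∀ S T : Matrix (Fin 2 × Fin n) (Fin 2 × Fin n) ℝ,
      (S.map Complex.ofReal) * (T.map Complex.ofReal) = (S * T).map Complex.ofReal := by
    intro S T
    exact (Matrix.map_mul (f := Complex.ofRealHom)).symm
  have hmeq : Ucᴴ * Mc * Uc
      = a.map Complex.ofReal + Complex.I • (b.map Complex.ofReal) := by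
    rw [hMcdef, Matrix.mul_add, Matrix.add_mul, Matrix.mul_smul, Matrix.smul_mul,
      hstarUc, hUcdef, hmap2, hmap2, hmap2, hmap2, hadef, hbdef]
  have hkey : ∀ i j, (a i j) ^ 2 + (b i j) ^ 2 ≤ a i i * a j j := by
    intro i j
    have h := entry_cs hm i j
    rw [hmeq] at h
    have hentry : ∀ k l, (a.map Complex.ofReal + Complex.I • (b.map Complex.ofReal)) k l
        = Complex.ofReal (a k l) + Complex.ofReal (b k l) * Complex.I := by
      intro k l
      simp [Matrix.add_apply, Matrix.smul_apply, Matrix.map_apply, smul_eq_mul]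
      ring
    rw [hentry i j, hentry i i, hentry j j, Complex.normSq_add_mul_I] at h
    simpa [pow_two] using h
  -- identification of |X|
  set Dabs : Matrix (Fin 2 × Fin n) (Fin 2 × Fin n) ℝ :=
    Matrix.diagonal (fun i => |lam i|) with hDdef
  have hDabsPsd : (U * Dabs * Uᴴ).PosSemidef := by
    refine Matrix.PosSemidef.mul_mul_conjTranspose_same ?_ U
    exact Matrix.posSemidef_diagonal_iff.mpr fun i => abs_nonneg _
  have hsq : (U * Dabs * Uᴴ) ^ 2 = Xᴴ * X := by
    have hXHX : Xᴴ * X = X * X := by rw [hXh.eq]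
    rw [pow_two, hconj, hXHX]
    conv_rhs => rw [hXeq, hconj]
    have habs : (fun i : Fin 2 × Fin n => |lam i| * |lam i|)
        = fun i => lam i * lam i := by
      funext i
      exact abs_mul_abs_self _
    rw [hDdef, Matrix.diagonal_mul_diagonal, Matrix.diagonal_mul_diagonal, habs]
  have hsqrt : (Matrix.posSemidef_conjTranspose_mul_self X).sqrt = U * Dabs * Uᴴ :=
    psd_sqrt_eq_of_sq (Matrix.posSemidef_conjTranspose_mul_self X) hDabsPsd hsq
  -- trace computations
  have h1 : (X * V * X * V).trace = ∑ i, ∑ j, lam i * lam j * (a i j * a j i) := by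
    conv_lhs => rw [hXeq, hVeq, hconj, hconj, hconj]
    rw [htr, trace_diag_mul_diag_mul]
  have h2 : (Omega n * X * Omega n * X).trace
      = ∑ i, ∑ j, lam i * lam j * (b i j * b j i) := by
    conv_lhs => rw [hXeq, hOeq, hconj, hconj, hconj]
    rw [htr, trace_rot4 b (Matrix.diagonal lam) b (Matrix.diagonal lam),
      trace_diag_mul_diag_mul]
  have h3 : ((Matrix.posSemidef_conjTranspose_mul_self X).sqrt * V).trace
      = ∑ i, |lam i| * a i i := by
    conv_lhs => rw [hsqrt, hVeq, hconj]
    rw [htr, hDdef, trace_diag_mul]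
  rw [h1, h2, h3]
  rw [sq, Finset.sum_mul_sum]
  rw [← Finset.sum_add_distrib]
  refine Finset.sum_le_sum fun i _ => ?_
  rw [← Finset.sum_add_distrib]
  refine Finset.sum_le_sum fun j _ => ?_
  rw [haSymm i j, hbAnti i j]
  have hk := hkey i j
  calc lam i * lam j * (a i j * a i j) + lam i * lam j * (b i j * -(b i j))
      = (lam i * lam j) * ((a i j) ^ 2 - (b i j) ^ 2) := by ring
    _ ≤ |(lam i * lam j) * ((a i j) ^ 2 - (b i j) ^ 2)| := le_abs_self _
    _ = |lam i| * |lam j| * |(a i j) ^ 2 - (b i j) ^ 2| := by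
        rw [abs_mul, abs_mul]
    _ ≤ |lam i| * |lam j| * ((a i j) ^ 2 + (b i j) ^ 2) := by
        refine mul_le_mul_of_nonneg_left ?_ (by positivity)
        calc |(a i j) ^ 2 - (b i j) ^ 2| ≤ |(a i j) ^ 2| + |(b i j) ^ 2| := abs_sub _ _
          _ = (a i j) ^ 2 + (b i j) ^ 2 := by rw [abs_of_nonneg (sq_nonneg _),
              abs_of_nonneg (sq_nonneg _)]
    _ ≤ |lam i| * |lam j| * (a i i * a j j) :=
        mul_le_mul_of_nonneg_left hk (by positivity)
    _ = |lam i| * a i i * (|lam j| * a j j) := by ring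
end

section
/- Define φ(x) = (1 − e^{−x})/2 + e^{−x/2}·sqrt( sinh²(x/2) + 1 − e^{−x²/(1+4x)} ) for x ≥ 0. Then φ(x) ≤ ((1+√5)/2)·x for all x ≥ 0. -/
theorem phi_le_golden_mul (x : ℝ) (hx : 0 ≤ x) :
    (1 - Real.exp (-x)) / 2 +
      Real.exp (-x/2) *
        Real.sqrt ((Real.sinh (x/2))^2 + 1 - Real.exp (-(x^2 / (1 + 4*x)))) ≤
      ((1 + Real.sqrt 5) / 2) * x := by
  have hs5 : Real.sqrt 5 ^ 2 = 5 := Real.sq_sqrt (by norm_num)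
  have hs5nn : (0:ℝ) ≤ Real.sqrt 5 := Real.sqrt_nonneg 5
  have hexp : (0:ℝ) < Real.exp (x/2) := Real.exp_pos _
  -- bound on first term
  have h1 : 1 - Real.exp (-x) ≤ x := by
    have := Real.add_one_le_exp (-x); linarith
  -- sinh bound: sinh(x/2) ≤ (x/2) * exp(x/2)
  have hsinh : Real.sinh (x/2) ≤ (x/2) * Real.exp (x/2) := by
    rw [Real.sinh_eq]
    have h2 : 1 - 2*(x/2) ≤ Real.exp (-(2*(x/2))) := by
      have := Real.add_one_le_exp (-(2*(x/2))); linarith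
    have h3 : Real.exp (-(2*(x/2))) * Real.exp (x/2) = Real.exp (-(x/2)) := by
      rw [← Real.exp_add]; ring_nf
    nlinarith [Real.exp_pos (x/2)]
  have hsinh0 : 0 ≤ Real.sinh (x/2) := by
    rw [Real.sinh_eq]
    have : Real.exp (-(x/2)) ≤ Real.exp (x/2) := Real.exp_le_exp.2 (by linarith)
    linarith
  -- bound inside sqrt
  have hu : 1 - Real.exp (-(x^2 / (1 + 4*x))) ≤ x^2 := by
    have h4 : 0 < 1 + 4*x := by linarith
    have h5 : x^2 / (1 + 4*x) ≤ x^2 := by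
      apply div_le_self (sq_nonneg x) (by linarith)
    have := Real.add_one_le_exp (-(x^2 / (1 + 4*x)))
    linarith
  have hx2 : x^2 ≤ x^2 * Real.exp x := by
    nlinarith [Real.one_le_exp hx, sq_nonneg x]
  have hexpx : Real.exp (x/2) ^ 2 = Real.exp x := by
    rw [sq, ← Real.exp_add]; ring_nf
  set c : ℝ := Real.sqrt 5 / 2 * x * Real.exp (x/2) with hc
  have hcnn : 0 ≤ c := by positivity
  have hS : (Real.sinh (x/2))^2 + 1 - Real.exp (-(x^2 / (1 + 4*x))) ≤ c^2 := by
    have hsq : (Real.sinh (x/2))^2 ≤ (x/2 * Real.exp (x/2))^2 := by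
      apply pow_le_pow_left₀ hsinh0 hsinh
    have hc2 : c^2 = 5/4 * x^2 * Real.exp x := by
      rw [hc, show (Real.sqrt 5/2*x*Real.exp (x/2))^2 = Real.sqrt 5^2 * x^2 * Real.exp (x/2)^2 /4 from by ring, hs5, hexpx]; ring
    nlinarith [hexpx, Real.exp_pos x]
  have hsqrt : Real.sqrt ((Real.sinh (x/2))^2 + 1 - Real.exp (-(x^2 / (1 + 4*x)))) ≤ c := by
    calc Real.sqrt _ ≤ Real.sqrt (c^2) := Real.sqrt_le_sqrt hS
    _ = c := Real.sqrt_sq hcnn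
  have hmul : Real.exp (-x/2) * c = Real.sqrt 5 / 2 * x := by
    rw [hc]
    have : Real.exp (-x/2) * Real.exp (x/2) = 1 := by
      rw [← Real.exp_add]; ring_nf; exact Real.exp_zero
    nlinarith [this]
  have hfin : Real.exp (-x/2) * Real.sqrt ((Real.sinh (x/2))^2 + 1 - Real.exp (-(x^2 / (1 + 4*x)))) ≤ Real.sqrt 5 / 2 * x := by
    rw [← hmul]
    exact mul_le_mul_of_nonneg_left hsqrt (le_of_lt (Real.exp_pos _))
  nlinarith [hfin]
end

section
/- Let γ be a 2n×2n real symmetric positive definite matrix whose spectrum is of the form ⋃_j {g_j, 1/g_j} with g_j > 0 (e.g. a pure symplectic covariance matrix γ = SSᵀ with S symplectic). Then sqrt(det(1+γ)) ≤ 2ⁿ · exp( (1/8)·Tr[γ − 1] ). -/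
open Matrix

theorem sqrt_det_one_add_le {n : ℕ} (γ : Matrix (Fin n × Fin 2) (Fin n × Fin 2) ℝ)
    (hγ : γ.PosDef) (g : Fin n → ℝ) (hg : ∀ j, 0 < g j)
    (hev : ∀ j : Fin n,
      hγ.1.eigenvalues (j, 0) = g j ∧ hγ.1.eigenvalues (j, 1) = (g j)⁻¹) :
    Real.sqrt ((1 + γ).det) ≤ 2 ^ n * Real.exp ((1/8) * (γ - 1).trace) := by
  set lam := hγ.1.eigenvalues with hlam
  obtain ⟨U, hUmem, hUspec⟩ : ∃ U ∈ unitaryGroup (Fin n × Fin 2) ℝ,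
      γ = U * diagonal (RCLike.ofReal ∘ lam) * star U :=
    ⟨_, hγ.1.eigenvectorUnitary.2, hγ.1.spectral_theorem⟩
  have hU : star U * U = 1 := (mem_unitaryGroup_iff').mp hUmem
  have hU' : U * star U = 1 := (mem_unitaryGroup_iff).mp hUmem
  have htr : γ.trace = ∑ i, lam i := by
    conv_lhs => rw [hUspec]
    rw [trace_mul_cycle, hU, one_mul, trace_diagonal]
    simp
  have hdet : (1 + γ).det = ∏ i, (1 + lam i) := by
    have h1 : (1 : Matrix (Fin n × Fin 2) (Fin n × Fin 2) ℝ) + γ =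
        U * (1 + diagonal (RCLike.ofReal ∘ lam)) * star U := by
      rw [mul_add, add_mul, mul_one, hU', ← hUspec]
    rw [h1, det_mul_right_comm, hU', one_mul]
    simp [← diagonal_one, diagonal_add, det_diagonal]
  have h0 : ∀ j, lam (j, 0) = g j := fun j => (hev j).1
  have h1g : ∀ j, lam (j, 1) = (g j)⁻¹ := fun j => (hev j).2
  have hS : (γ - 1).trace = ∑ j, (g j + (g j)⁻¹ - 2) := by
    rw [trace_sub, trace_one, htr, Fintype.sum_prod_type]
    simp only [Fin.sum_univ_two, h0, h1g, Finset.sum_sub_distrib, Finset.sum_const,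
      Finset.card_univ, Fintype.card_fin, Fintype.card_prod, smul_eq_mul]
    push_cast
    ring
  have hbound : (1 + γ).det ≤ 4 ^ n * Real.exp ((γ - 1).trace / 4) := by
    rw [hdet, Fintype.prod_prod_type]
    have hstep : ∀ j : Fin n, ∏ b : Fin 2, (1 + lam (j, b)) ≤
        4 * Real.exp ((g j + (g j)⁻¹ - 2) / 4) := by
      intro j
      have hgj := hg j
      have hne : g j ≠ 0 := ne_of_gt hgj
      have hprod : ∏ b : Fin 2, (1 + lam (j, b)) = 4 + (g j + (g j)⁻¹ - 2) := by
        rw [Fin.prod_univ_two, h0, h1g]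
        field_simp
        ring
      have hexp := Real.add_one_le_exp ((g j + (g j)⁻¹ - 2) / 4)
      rw [hprod]
      nlinarith [Real.exp_pos ((g j + (g j)⁻¹ - 2) / 4)]
    calc ∏ j, ∏ b : Fin 2, (1 + lam (j, b))
        ≤ ∏ j, 4 * Real.exp ((g j + (g j)⁻¹ - 2) / 4) := by
          apply Finset.prod_le_prod
          · intro j _
            apply Finset.prod_nonneg
            intro b _
            have : 0 < lam (j, b) := hγ.eigenvalues_pos (j, b)
            linarith
          · exact fun j _ => hstep j
      _ = 4 ^ n * Real.exp ((γ - 1).trace / 4) := by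
          rw [Finset.prod_mul_distrib, Finset.prod_const, Finset.card_univ, Fintype.card_fin,
            ← Real.exp_sum, hS, Finset.sum_div]
  have hrhs : (4 : ℝ) ^ n * Real.exp ((γ - 1).trace / 4) =
      (2 ^ n * Real.exp ((1/8) * (γ - 1).trace)) ^ 2 := by
    rw [mul_pow, ← pow_mul, mul_comm n 2, pow_mul, sq (Real.exp _), ← Real.exp_add]
    norm_num
    ring_nf
  calc Real.sqrt ((1 + γ).det) ≤ Real.sqrt ((2 ^ n * Real.exp ((1/8) * (γ - 1).trace)) ^ 2) := by
        apply Real.sqrt_le_sqrt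
        rw [← hrhs]
        exact hbound
    _ = 2 ^ n * Real.exp ((1/8) * (γ - 1).trace) := Real.sqrt_sq (by positivity)
end
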